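/- In the mixture model with known background, the L²(f)-orthogonal projection of the score g = (s−b)/f onto the nuisance tangent set Λ = {h·s/f : ∫ h s = 0, supp(h) ⊆ S} equals Πg = (f/s)·[g − B(C)/F(S)]·I_S, and the residual g − Πg equals (B(C)/F(S))·I_S − (1/(1−λ))·I_C; moreover ∫ (g − Πg)·(h·s/f)·f = 0 for every h with ∫ h s = 0 and supp(h) ⊆ S. -/

import Mathlib

/-!
On `S` the projection satisfies `Πg · s / f = g - c` with `c = B(C)/F(S)`, so the residual is the
constant `c` there; off `S` we have `s = 0`, hence `f = (1-λ) b` and the score is the constant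
`-1/(1-λ)`. The value of `c` is forced by centring: as `∫_S s = 1 = ∫ b`, we get
`∫_S Πg · s = ∫_S (s - b) - c F(S) = B(C) - c F(S)`. Orthogonality holds because the residual is
constant on `S` while every nuisance direction `h s` vanishes off `S` and has mean zero.
-/

open MeasureTheory Set

variable {α : Type*} {S : Set α}

section Mixture

variable {b s f g : α → ℝ} {lam c : ℝ}

theorem mixture_score_eq_of_eq_zero (hf : ∀ x, f x = (1 - lam) * b x + lam * s x)
    (hg : ∀ x, g x = (s x - b x) / f x) {x : α} (hfx : f x ≠ 0) (hsx : s x = 0) :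
    g x = -(1 / (1 - lam)) := by
  rw [hf, hsx, mul_zero, add_zero] at hfx
  rw [hg, hf, hsx]
  field_simp [left_ne_zero_of_mul hfx, right_ne_zero_of_mul hfx]
  ring

theorem projection_mul_eq_of_mem (hg : ∀ x, g x = (s x - b x) / f x) {x : α} (hx : x ∈ S)
    (hsx : s x ≠ 0) (hfx : f x ≠ 0) :
    S.indicator (fun y => f y / s y * (g y - c)) x * s x = s x - b x - c * f x := by
  rw [indicator_of_mem hx, hg]
  field_simp

theorem mixture_residual_eq (hf : ∀ x, f x = (1 - lam) * b x + lam * s x)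
    (hg : ∀ x, g x = (s x - b x) / f x) (hfne : ∀ x, f x ≠ 0) (hsS : ∀ x ∈ S, s x ≠ 0)
    (hsC : ∀ x ∈ Sᶜ, s x = 0) (x : α) :
    g x - S.indicator (fun y => f y / s y * (g y - c)) x * s x / f x
      = S.indicator (fun _ => c) x - Sᶜ.indicator (fun _ => 1 / (1 - lam)) x := by
  by_cases hx : x ∈ S
  · rw [projection_mul_eq_of_mem hg hx (hsS x hx) (hfne x), indicator_of_mem hx,
      indicator_of_notMem (notMem_compl_iff.mpr hx), hg]
    field_simp [hfne x]
    ring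
  · rw [indicator_of_notMem hx, indicator_of_notMem hx, indicator_of_mem hx,
      mixture_score_eq_of_eq_zero hf hg (hfne x) (hsC x hx)]
    ring

end Mixture

variable [MeasurableSpace α] {μ : Measure α}

theorem measure_ne_zero_of_setIntegral_ne_zero {φ : α → ℝ} (h : ∫ x in S, φ x ∂μ ≠ 0) :
    μ S ≠ 0 :=
  fun hS => h (setIntegral_measure_zero φ hS)

theorem setIntegral_pos_of_forall_mem_pos (hS : MeasurableSet S) {φ : α → ℝ}
    (hφ : IntegrableOn φ S μ) (hpos : ∀ x ∈ S, 0 < φ x) (hμ : μ S ≠ 0) :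
    0 < ∫ x in S, φ x ∂μ := by
  rw [setIntegral_pos_iff_support_of_nonneg_ae
      ((ae_restrict_iff' hS).mpr (ae_of_all _ fun x hx => (hpos x hx).le)) hφ,
    inter_eq_right.mpr fun x hx => Function.mem_support.mpr (hpos x hx).ne']
  exact pos_iff_ne_zero.mpr hμ

theorem setIntegral_sub_eq_setIntegral_compl (hS : MeasurableSet S) {b s : α → ℝ}
    (hb : Integrable b μ) (hs : IntegrableOn s S μ) (hmass : ∫ x in S, s x ∂μ = ∫ x, b x ∂μ) :
    ∫ x in S, (s x - b x) ∂μ = ∫ x in Sᶜ, b x ∂μ := by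
  rw [integral_sub hs hb.integrableOn, setIntegral_compl hS hb, hmass]

theorem integral_indicator_sub_indicator_compl_mul (hS : MeasurableSet S) {c k : ℝ}
    {r φ f : α → ℝ} (hr : ∀ x, r x = S.indicator (fun _ => c) x - Sᶜ.indicator (fun _ => k) x)
    (hφ : ∀ x ∉ S, φ x = 0) (hf : ∀ x, f x ≠ 0) :
    ∫ x, r x * (φ x / f x) * f x ∂μ = c * ∫ x in S, φ x ∂μ := by
  have hpt : ∀ x, r x * (φ x / f x) * f x = S.indicator (fun y => c * φ y) x := by
    intro x
    by_cases hx : x ∈ S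
    · rw [hr, indicator_of_mem hx, indicator_of_mem hx,
        indicator_of_notMem (notMem_compl_iff.mpr hx), sub_zero, mul_assoc,
        div_mul_cancel₀ _ (hf x)]
    · rw [indicator_of_notMem hx, hφ x hx]
      ring
  rw [integral_congr_ae (ae_of_all _ hpt), integral_indicator hS, integral_const_mul]

theorem setIntegral_projection_mul {b s f g : α → ℝ} {c : ℝ} (hS : MeasurableSet S)
    (hg : ∀ x, g x = (s x - b x) / f x) (hs : ∀ x ∈ S, s x ≠ 0) (hf : ∀ x, f x ≠ 0)
    (hsb : IntegrableOn (fun x => s x - b x) S μ) (hfi : IntegrableOn f S μ) :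
    ∫ x in S, S.indicator (fun y => f y / s y * (g y - c)) x * s x ∂μ
      = ∫ x in S, (s x - b x) ∂μ - c * ∫ x in S, f x ∂μ := by
  rw [setIntegral_congr_fun hS fun x hx => projection_mul_eq_of_mem (c := c) hg hx (hs x hx) (hf x),
    integral_sub hsb (hfi.const_mul c), integral_const_mul]

theorem stmt_19_general (S C : Set ℝ) (hS : MeasurableSet S)
    (hdisj : Disjoint S C) (hcover : S ∪ C = Set.univ)
    (b s : ℝ → ℝ) (lam : ℝ)
    (hbint : Integrable b) (hbnorm : ∫ x, b x = 1)
    (hsC : ∀ x ∈ C, s x = 0) (hsint : Integrable s) (hsnorm : ∫ x in S, s x = 1)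
    (hspos : ∀ x ∈ S, 0 < s x)
    (f : ℝ → ℝ) (hf : ∀ x, f x = (1 - lam) * b x + lam * s x)
    (hfpos : ∀ x, 0 < f x)
    (BC FS : ℝ) (hBC : BC = ∫ x in C, b x) (hFS : FS = ∫ x in S, f x)
    (g Pg : ℝ → ℝ) (hg : ∀ x, g x = (s x - b x) / f x)
    (hPg : ∀ x, Pg x = Set.indicator S (fun y => f y / s y * (g y - BC / FS)) x) :
    ((∀ x ∈ C, Pg x = 0) ∧ (∫ x in S, Pg x * s x = 0)) ∧
    (∀ x, g x - Pg x * s x / f x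
        = Set.indicator S (fun _ => BC / FS) x - Set.indicator C (fun _ => 1 / (1 - lam)) x) ∧
    (∀ h : ℝ → ℝ, (∀ x ∈ C, h x = 0) → IntegrableOn (fun x => h x * s x) S →
      (∫ x in S, h x * s x = 0) →
      ∫ x, (g x - Pg x * s x / f x) * (h x * s x / f x) * f x = 0) := by
  obtain rfl : C = Sᶜ := (IsCompl.of_eq hdisj.eq_bot hcover).compl_eq.symm
  obtain rfl : Pg = S.indicator (fun y => f y / s y * (g y - BC / FS)) := funext hPg
  have hfne : ∀ x, f x ≠ 0 := fun x => (hfpos x).ne'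
  have hsne : ∀ x ∈ S, s x ≠ 0 := fun x hx => (hspos x hx).ne'
  have hfint : Integrable f := by
    rw [funext hf]
    exact (hbint.const_mul _).add (hsint.const_mul _)
  have hFS0 : FS ≠ 0 := by
    have hS0 := measure_ne_zero_of_setIntegral_ne_zero (hsnorm ▸ one_ne_zero)
    rw [hFS]
    exact (setIntegral_pos_of_forall_mem_pos hS hfint.integrableOn (fun x _ => hfpos x) hS0).ne'
  have hres := mixture_residual_eq (c := BC / FS) hf hg hfne hsne hsC
  refine ⟨⟨fun x hx => indicator_of_notMem hx _, ?_⟩, hres, fun h _ _ hmean => ?_⟩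
  · rw [setIntegral_projection_mul hS hg hsne hfne (hsint.sub hbint).integrableOn
        hfint.integrableOn, setIntegral_sub_eq_setIntegral_compl hS hbint hsint.integrableOn
        (hsnorm.trans hbnorm.symm), ← hBC, ← hFS, div_mul_cancel₀ _ hFS0, sub_self]
  · rw [integral_indicator_sub_indicator_compl_mul hS hres (fun x hx => by rw [hsC x hx, mul_zero])
      hfne, hmean, mul_zero]

/-- The L²(f)-orthogonal projection of the score g = (s−b)/f onto
the nuisance tangent set Λ = {h·s/f : ∫ h s = 0, supp(h) ⊆ S} is given by
h = Πg := (f/s)·[g − B(C)/F(S)]·I_S (so the projected element is Πg·s/f): Πg is a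
valid nuisance direction, the residual g − Πg·s/f equals
(B(C)/F(S))·I_S − (1/(1−λ))·I_C pointwise, and the residual is orthogonal to every
element of Λ in L²(f). -/
theorem stmt_19 (S C : Set ℝ) (hS : MeasurableSet S) (hC : MeasurableSet C)
    (hdisj : Disjoint S C) (hcover : S ∪ C = Set.univ)
    (b s : ℝ → ℝ) (lam : ℝ) (hlam : lam ∈ Set.Ioo (0:ℝ) 1)
    (hbint : Integrable b) (hbnorm : ∫ x, b x = 1)
    (hsC : ∀ x ∈ C, s x = 0) (hsint : Integrable s) (hsnorm : ∫ x in S, s x = 1)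
    (hspos : ∀ x ∈ S, 0 < s x)
    (f : ℝ → ℝ) (hf : ∀ x, f x = (1 - lam) * b x + lam * s x)
    (hfpos : ∀ x, 0 < f x)
    (BC FS : ℝ) (hBC : BC = ∫ x in C, b x) (hFS : FS = ∫ x in S, f x)
    (hBC0 : 0 < BC)
    (g Pg : ℝ → ℝ) (hg : ∀ x, g x = (s x - b x) / f x)
    (hPg : ∀ x, Pg x = Set.indicator S (fun y => f y / s y * (g y - BC / FS)) x) :
    ((∀ x ∈ C, Pg x = 0) ∧ (∫ x in S, Pg x * s x = 0)) ∧
    (∀ x, g x - Pg x * s x / f x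
        = Set.indicator S (fun _ => BC / FS) x - Set.indicator C (fun _ => 1 / (1 - lam)) x) ∧
    (∀ h : ℝ → ℝ, (∀ x ∈ C, h x = 0) → IntegrableOn (fun x => h x * s x) S →
      (∫ x in S, h x * s x = 0) →
      ∫ x, (g x - Pg x * s x / f x) * (h x * s x / f x) * f x = 0) :=
  stmt_19_general S C hS hdisj hcover b s lam hbint hbnorm hsC hsint hsnorm hspos f hf hfpos BC FS
    hBC hFS g Pg hg hPg
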